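/- For every ε > 0 there exists a finite rational probability distribution P such that the Knuth–Yao optimal toll Σᵢ pᵢ·τ̃(pᵢ) < ε while for every depth K the ALDR toll exceeds 2 − ε. Concretely, for ε = 2^{-t}, take n = 2 + 2^{t+1}, m = 3·2^{t+1}, a₁ = a₂ = a₃ = 1, and a₄ = … = a_n = 3; then Σᵢ pᵢ·τ̃(pᵢ) = 3·(1/m)·τ̃(1/m) < ε where τ̃(x) = (ν(x) − x log₂(1/x))/x. -/

import Mathlib

noncomputable def epsBit (d : ℕ) (x : ℝ) : ℝ := ((⌊2 ^ d * x⌋ % 2 : ℤ) : ℝ)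

noncomputable def nu (x : ℝ) : ℝ := ∑' d : ℕ, (d : ℝ) * epsBit d x / 2 ^ d

noncomputable def trel (x : ℝ) : ℝ := (nu x - x * Real.logb 2 (1 / x)) / x

/-- Shannon entropy of the distribution with three weights `1` and
`2^(t+1) - 1` weights `3`, over `m = 3·2^(t+1)`. -/
noncomputable def Hdist (t : ℕ) : ℝ :=
  let m : ℕ := 3 * 2 ^ (t + 1)
  3 * ((1 : ℝ) / m) * Real.logb 2 (m : ℝ) +
    ((2 : ℝ) ^ (t + 1) - 1) * (3 / m) * Real.logb 2 ((m : ℝ) / 3)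

/-- Expected entropy cost of the depth-`K` amplified (ALDR) rejection sampler
for that distribution, with amplification factor `c = ⌊2^K/m⌋`. -/
noncomputable def aldrCost (t K : ℕ) : ℝ :=
  let m : ℕ := 3 * 2 ^ (t + 1)
  let c : ℕ := 2 ^ K / m
  ((2 : ℝ) ^ K / ((c : ℝ) * m)) *
    (nu (((2 ^ K - c * m : ℕ) : ℝ) / 2 ^ K) +
      3 * nu ((c : ℝ) / 2 ^ K) +
      ((2 : ℝ) ^ (t + 1) - 1) * nu (((3 * c : ℕ) : ℝ) / 2 ^ K))

noncomputable def aldrToll (t K : ℕ) : ℝ := aldrCost t K - Hdist t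

/-!
For a dyadic rational, `ν(n / 2^K) = (K n - W n) / 2^K` where `W n = ∑ᵢ i 2ⁱ nᵢ` runs over the
binary digits of `n`, and `W (2n + b) = 2 W n + 2n` evaluates `W` by halving. Writing
`2^(K-t-1) = 3c + r` with `r ∈ {1, 2}`, the depth-`K` sampler has amplification factor `c` and
reject weight `r 2^(t+1)`; its atoms `r 2^(t+1)`, `c`, `3c` are a power of two, a number with
alternating binary digits and a block of ones. Their weights `W` are explicit, and the expected
cost is `t + 3 + 2/m` for every `K`, so the toll is `2 + (2/3 - log₂ 3)/2^(t+1) > 2 - 2^(-t)`.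
Meanwhile `1/m = 0.0…0010101…₂`, whence `3 (ν(1/m) - (1/m) log₂ m) = (8/3 - log₂ 3)/2^(t+1)`,
which is below `2^(-t)`.
-/

open Finset

theorem sum_range_pow_mul_div_pow_mod (b n K : ℕ) :
    ∑ i ∈ range K, b ^ i * (n / b ^ i % b) = n % b ^ K := by
  induction K with
  | zero => simp [Nat.mod_one]
  | succ K ih => rw [sum_range_succ, ih, Nat.mod_pow_succ]

/-- `∑ᵢ i 2ⁱ nᵢ` over the binary digits `nᵢ` of `n`. -/
def bitWeight : ℕ → ℕ
  | 0 => 0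
  | n + 1 => 2 * bitWeight ((n + 1) / 2) + 2 * ((n + 1) / 2)

theorem bitWeight_zero : bitWeight 0 = 0 := by simp [bitWeight]

theorem bitWeight_eq_div_two (n : ℕ) : bitWeight n = 2 * bitWeight (n / 2) + 2 * (n / 2) := by
  cases n <;> simp [bitWeight]

theorem bitWeight_two_mul_add {b : ℕ} (hb : b < 2) (n : ℕ) :
    bitWeight (2 * n + b) = 2 * bitWeight n + 2 * n := by
  rw [bitWeight_eq_div_two, show (2 * n + b) / 2 = n by omega]

theorem sum_range_eq_bitWeight {K n : ℕ} (hn : n < 2 ^ K) :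
    ∑ i ∈ range K, i * 2 ^ i * (n / 2 ^ i % 2) = bitWeight n := by
  induction K generalizing n with
  | zero => simp_all [bitWeight]
  | succ K ih =>
    have hdiv : ∀ i, n / 2 ^ (i + 1) = n / 2 / 2 ^ i := fun i => by
      rw [Nat.div_div_eq_div_mul, pow_succ']
    have hn2 : n / 2 < 2 ^ K := by rw [pow_succ] at hn; omega
    calc ∑ i ∈ range (K + 1), i * 2 ^ i * (n / 2 ^ i % 2)
        = 2 * ∑ i ∈ range K, i * 2 ^ i * (n / 2 / 2 ^ i % 2)
          + 2 * ∑ i ∈ range K, 2 ^ i * (n / 2 / 2 ^ i % 2) := by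
          simp only [sum_range_succ', hdiv, mul_sum, ← sum_add_distrib, zero_mul, add_zero]
          exact sum_congr rfl fun i _ => by ring
      _ = bitWeight n := by
          rw [ih hn2, sum_range_pow_mul_div_pow_mod, Nat.mod_eq_of_lt hn2, ← bitWeight_eq_div_two]

theorem bitWeight_two_pow_mul (a n : ℕ) :
    bitWeight (2 ^ a * n) = 2 ^ a * bitWeight n + a * 2 ^ a * n := by
  induction a with
  | zero => simp
  | succ a ih =>
    rw [pow_succ', mul_assoc, ← add_zero (2 * _), bitWeight_two_mul_add two_pos, ih]
    ring

theorem bitWeight_add_two_eq_two_mul {r : ℕ} (hr : r = 1 ∨ r = 2) : bitWeight r + 2 = 2 * r := by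
  have h1 : bitWeight 1 = 0 := by simpa [bitWeight_zero] using bitWeight_two_mul_add one_lt_two 0
  rcases hr with rfl | rfl
  · simp [h1]
  · simpa [h1] using bitWeight_two_mul_add two_pos 1

theorem bitWeight_add_two_pow_succ_of_add_eq_two_pow {n r j : ℕ} (hr : r = 1 ∨ r = 2)
    (h : n + r = 2 ^ j) : bitWeight n + 2 ^ (j + 1) = j * 2 ^ j + 2 := by
  induction j generalizing n r with
  | zero =>
    obtain rfl : n = 0 := by omega
    simp [bitWeight_zero]
  | succ j ih =>
    have hn : n / 2 + 1 = 2 ^ j := by rw [pow_succ] at h; omega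
    have hq := ih (Or.inl rfl) hn
    rw [← Nat.div_add_mod n 2, bitWeight_two_mul_add (Nat.mod_lt n two_pos)]
    simp only [pow_succ] at hq ⊢
    linarith

theorem three_mul_bitWeight_add_of_three_mul_add_eq_two_pow {c r j : ℕ} (hr : r = 1 ∨ r = 2)
    (h : 3 * c + r = 2 ^ j) : 3 * bitWeight c + 2 * c + 2 ^ (j + 1) = j * 2 ^ j + 2 := by
  induction j generalizing c r with
  | zero =>
    obtain rfl : c = 0 := by omega
    simp [bitWeight_zero]
  | succ j ih =>
    -- halving `c` turns `r` into `c % 2 + 1`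
    have hc : 3 * (c / 2) + (c % 2 + 1) = 2 ^ j := by rw [pow_succ] at h; omega
    have hq := ih (by omega) hc
    rw [← Nat.div_add_mod c 2, bitWeight_two_mul_add (Nat.mod_lt c two_pos)]
    simp only [pow_succ] at hq ⊢
    linarith

theorem epsBit_natCast_div (d m q : ℕ) :
    epsBit d ((m : ℝ) / q) = ((2 ^ d * m / q % 2 : ℕ) : ℝ) := by
  have h : (2 : ℝ) ^ d * (m / q) = ((2 ^ d * m : ℕ) : ℝ) / q := by push_cast; ring
  rw [epsBit, h, Int.floor_div_natCast, Int.floor_natCast]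
  norm_cast

theorem nu_natCast_div_two_pow {K n : ℕ} (hn : n < 2 ^ K) :
    nu ((n : ℝ) / 2 ^ K) = ((K : ℝ) * n - bitWeight n) / 2 ^ K := by
  have hε : ∀ d, epsBit d ((n : ℝ) / 2 ^ K) = ((2 ^ d * n / 2 ^ K % 2 : ℕ) : ℝ) := fun d => by
    exact_mod_cast epsBit_natCast_div d n (2 ^ K)
  have hlow : ∀ d ≤ K, 2 ^ d * n / 2 ^ K = n / 2 ^ (K - d) := fun d hd => by
    obtain ⟨e, rfl⟩ := Nat.exists_eq_add_of_le hd
    rw [Nat.add_sub_cancel_left, pow_add, Nat.mul_div_mul_left _ _ (by positivity)]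
  have hhigh : ∀ d, K < d → 2 ^ d * n / 2 ^ K % 2 = 0 := fun d hd => by
    obtain ⟨e, rfl⟩ := Nat.exists_eq_add_of_lt hd
    rw [show 2 ^ (K + e + 1) * n = 2 ^ K * (2 * (2 ^ e * n)) by ring,
      Nat.mul_div_cancel_left _ (by positivity)]
    simp
  have hn' : n < 2 ^ (K + 1) := hn.trans_le (Nat.pow_le_pow_right two_pos K.le_succ)
  have hsum := sum_range_pow_mul_div_pow_mod 2 n (K + 1)
  rw [Nat.mod_eq_of_lt hn'] at hsum
  rw [nu, tsum_eq_sum (s := range (K + 1)) fun d hd => by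
    rw [hε, hhigh d (by simpa using hd)]; simp]
  calc ∑ d ∈ range (K + 1), (d : ℝ) * epsBit d (n / 2 ^ K) / 2 ^ d
      = ∑ i ∈ range (K + 1), ((K : ℝ) * ((2 ^ i * (n / 2 ^ i % 2) : ℕ) : ℝ)
          - ((i * 2 ^ i * (n / 2 ^ i % 2) : ℕ) : ℝ)) / 2 ^ K := by
        rw [← sum_range_reflect]
        refine sum_congr rfl fun i hi => ?_
        have hi : i ≤ K := Nat.lt_succ_iff.mp (mem_range.mp hi)
        have hpow : (2 : ℝ) ^ K = 2 ^ i * 2 ^ (K - i) := by rw [← pow_add, Nat.add_sub_cancel' hi]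
        rw [hε, show K + 1 - 1 - i = K - i by omega, hlow _ (Nat.sub_le K i),
          Nat.sub_sub_self hi, Nat.cast_sub hi, hpow]
        push_cast
        field_simp
    _ = ((K : ℝ) * n - bitWeight n) / 2 ^ K := by
        rw [← sum_div, sum_sub_distrib, ← mul_sum, ← Nat.cast_sum, ← Nat.cast_sum, hsum,
          sum_range_eq_bitWeight hn']

theorem two_pow_div_three_mul_two_pow_mod_two (a d : ℕ) :
    2 ^ d / (3 * 2 ^ a) % 2 = 1 ↔ d ∈ Set.range (fun k => a + 2 + 2 * k) := by
  simp only [Set.mem_range]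
  rcases lt_or_ge d a with hd | hd
  · rw [Nat.div_eq_of_lt]
    · omega
    · calc 2 ^ d < 2 ^ a := Nat.pow_lt_pow_right one_lt_two hd
        _ ≤ 3 * 2 ^ a := Nat.le_mul_of_pos_left _ three_pos
  obtain ⟨e, rfl⟩ := Nat.exists_eq_add_of_le hd
  rw [pow_add, mul_comm 3, Nat.mul_div_mul_left _ _ (by positivity)]
  have h4 : ∀ k, 4 ^ k % 3 = 1 := fun k => by simp [Nat.pow_mod]
  obtain ⟨k, rfl | rfl⟩ := Nat.even_or_odd' e
  · rcases k with _ | k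
    · exact iff_of_false (by decide) (by omega)
    · refine iff_of_true ?_ ⟨k, by ring⟩
      have := h4 k
      rw [pow_mul, pow_succ]
      norm_num
      omega
  · refine iff_of_false ?_ (by omega)
    have := h4 k
    rw [pow_succ, pow_mul]
    norm_num
    omega

theorem nu_one_div_three_mul_two_pow (a : ℕ) :
    nu (1 / (3 * 2 ^ a)) = ((a : ℝ) / 3 + 8 / 9) / 2 ^ a := by
  have hterm : ∀ d : ℕ, (d : ℝ) * epsBit d (1 / (3 * 2 ^ a)) / 2 ^ d
      = (Set.range fun k => a + 2 + 2 * k).indicator (fun d => (d : ℝ) / 2 ^ d) d := fun d => by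
    have hε := epsBit_natCast_div d 1 (3 * 2 ^ a)
    have hbit := two_pow_div_three_mul_two_pow_mod_two a d
    push_cast at hε
    rw [hε, mul_one]
    by_cases h : d ∈ Set.range fun k => a + 2 + 2 * k
    · rw [Set.indicator_of_mem h, hbit.mpr h]; simp
    · rw [Set.indicator_of_notMem h, Nat.mod_two_ne_one.mp (mt hbit.mp h)]; simp
  have hsum : HasSum (fun k : ℕ => ((a + 2 + 2 * k : ℕ) : ℝ) / 2 ^ (a + 2 + 2 * k))
      (((a : ℝ) + 2) / 2 ^ (a + 2) * (1 - 1 / 4)⁻¹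
        + 2 / 2 ^ (a + 2) * ((1 / 4) / (1 - 1 / 4) ^ 2)) := by
    have hgeom := hasSum_geometric_of_lt_one (r := (1 : ℝ) / 4) (by norm_num) (by norm_num)
    have hgeom' := hasSum_coe_mul_geometric_of_norm_lt_one (r := (1 : ℝ) / 4) (by norm_num)
    have hsplit : ∀ k : ℕ, ((a + 2 + 2 * k : ℕ) : ℝ) / 2 ^ (a + 2 + 2 * k)
        = ((a : ℝ) + 2) / 2 ^ (a + 2) * (1 / 4) ^ k + 2 / 2 ^ (a + 2) * (k * (1 / 4) ^ k) :=
      fun k => by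
        rw [pow_add _ (a + 2), pow_mul, one_div_pow]
        push_cast
        field_simp
        ring
    simp only [hsplit]
    exact (hgeom.mul_left _).add (hgeom'.mul_left _)
  rw [nu, tsum_congr hterm, ← _root_.tsum_subtype,
    tsum_range (fun d : ℕ => (d : ℝ) / 2 ^ d) fun k l h => by simpa using h, hsum.tsum_eq]
  field_simp
  ring

theorem exists_three_mul_add_eq_two_pow (j : ℕ) : ∃ c r, (r = 1 ∨ r = 2) ∧ 3 * c + r = 2 ^ j := by
  have h3 : ¬ 3 ∣ 2 ^ j := fun h => by
    have := Nat.Prime.dvd_of_dvd_pow Nat.prime_three h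
    omega
  exact ⟨2 ^ j / 3, 2 ^ j % 3, by omega, Nat.div_add_mod _ _⟩

theorem aldrCost_eq {t K : ℕ} (hK : t + 3 ≤ K) :
    aldrCost t K = t + 3 + 2 / (3 * 2 ^ (t + 1)) := by
  obtain ⟨j, rfl⟩ : ∃ j, K = j + (t + 1) := ⟨K - (t + 1), by omega⟩
  obtain ⟨c, r, hr, hcr⟩ := exists_three_mul_add_eq_two_pow j
  have hj : 4 ≤ 2 ^ j := by
    calc 4 = 2 ^ 2 := rfl
      _ ≤ 2 ^ j := Nat.pow_le_pow_right two_pos (by omega)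
  have hT : 0 < 2 ^ (t + 1) := by positivity
  have hK : 2 ^ (j + (t + 1)) = (3 * c + r) * 2 ^ (t + 1) := by rw [pow_add, hcr]
  have hquot : 2 ^ (j + (t + 1)) / (3 * 2 ^ (t + 1)) = c := by
    rw [hK, Nat.mul_div_mul_right _ _ hT]
    omega
  have hrem : 2 ^ (j + (t + 1)) - c * (3 * 2 ^ (t + 1)) = 2 ^ (t + 1) * r := by
    rw [hK, show (3 * c + r) * 2 ^ (t + 1) = c * (3 * 2 ^ (t + 1)) + 2 ^ (t + 1) * r by ring,
      Nat.add_sub_cancel_left]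
  have hrK : 2 ^ (t + 1) * r < 2 ^ (j + (t + 1)) := by
    rw [hK, mul_comm]; exact Nat.mul_lt_mul_of_pos_right (by omega) hT
  have hcK : 3 * c < 2 ^ (j + (t + 1)) := by
    rw [hK]; exact lt_of_lt_of_le (by omega) (Nat.le_mul_of_pos_right _ hT)
  simp only [aldrCost]
  rw [hquot, hrem, nu_natCast_div_two_pow hrK, nu_natCast_div_two_pow (by omega),
    nu_natCast_div_two_pow hcK]
  have hW₁ := bitWeight_two_pow_mul (t + 1) r
  have hW₂ := bitWeight_add_two_eq_two_mul hr
  have hW₃ := three_mul_bitWeight_add_of_three_mul_add_eq_two_pow hr hcr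
  have hW₄ := bitWeight_add_two_pow_succ_of_add_eq_two_pow hr hcr
  have hc0 : (0 : ℝ) < c := by norm_cast; omega
  rify at hW₁ hW₂ hW₃ hW₄ hcr
  push_cast [pow_add 2 j]
  field_simp
  linear_combination -hW₁ - 2 ^ (t + 1) * hW₂ - hW₃ - (2 ^ (t + 1) - 1) * hW₄
    + 2 ^ (t + 1) * (j - 2) * hcr

theorem Hdist_eq (t : ℕ) : Hdist t = t + 1 + Real.logb 2 3 / 2 ^ (t + 1) := by
  have hm : Real.logb 2 (3 * 2 ^ (t + 1)) = Real.logb 2 3 + (t + 1) := by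
    rw [Real.logb_mul three_ne_zero (by positivity), Real.logb_pow,
      Real.logb_self_eq_one one_lt_two]
    push_cast
    ring
  simp only [Hdist]
  push_cast
  rw [hm, mul_div_cancel_left₀ _ three_ne_zero, Real.logb_pow, Real.logb_self_eq_one one_lt_two]
  field_simp
  push_cast
  ring

theorem aldrToll_eq {t K : ℕ} (hK : t + 3 ≤ K) :
    aldrToll t K = 2 + (2 / 3 - Real.logb 2 3) / 2 ^ (t + 1) := by
  rw [aldrToll, aldrCost_eq hK, Hdist_eq]
  field_simp
  ring

theorem three_mul_one_div_mul_trel (a : ℕ) :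
    3 * (1 / (3 * 2 ^ a)) * trel (1 / (3 * 2 ^ a)) = (8 / 3 - Real.logb 2 3) / 2 ^ a := by
  rw [trel, nu_one_div_three_mul_two_pow, one_div_one_div,
    Real.logb_mul three_ne_zero (by positivity), Real.logb_pow, Real.logb_self_eq_one one_lt_two]
  field_simp
  ring

theorem one_lt_logb_two_three : 1 < Real.logb 2 3 := by
  rw [Real.lt_logb_iff_rpow_lt one_lt_two (by norm_num)]; norm_num

theorem logb_two_three_lt_two : Real.logb 2 3 < 2 := by
  rw [Real.logb_lt_iff_lt_rpow one_lt_two (by norm_num)]; norm_num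

theorem add_three_le_clog_two_three_mul_two_pow (t : ℕ) : t + 3 ≤ Nat.clog 2 (3 * 2 ^ (t + 1)) :=
  (Nat.lt_clog_iff_pow_lt one_lt_two).2 (by
    have := Nat.two_pow_pos (t + 1); rw [pow_succ 2 (t + 1)]; omega)

theorem aldr_large_gap (t : ℕ) :
    3 * ((1 : ℝ) / (3 * 2 ^ (t + 1))) * trel (1 / (3 * 2 ^ (t + 1)))
        < (2 : ℝ) ^ (-(t : ℤ)) ∧
    ∀ K : ℕ, Nat.clog 2 (3 * 2 ^ (t + 1)) ≤ K →
      2 - (2 : ℝ) ^ (-(t : ℤ)) < aldrToll t K := by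
  have hpow : (2 : ℝ) ^ (-(t : ℤ)) = 2 / 2 ^ (t + 1) := by
    rw [zpow_neg, zpow_natCast, pow_succ]; field_simp
  refine ⟨?_, fun K hK => ?_⟩
  · rw [three_mul_one_div_mul_trel, hpow]
    gcongr
    linarith [one_lt_logb_two_three]
  · rw [aldrToll_eq ((add_three_le_clog_two_three_mul_two_pow t).trans hK), hpow, sub_eq_add_neg,
      ← neg_div]
    gcongr
    linarith [logb_two_three_lt_two]
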